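/- arXiv:alg-geom/9611003 — 3 statements merged into one kernel-verified Lean document; each statement's English description precedes it below -/
import Mathlib

section
/- Let (f_j)_{j≥1} be a sequence of rational numbers and let f = ∑_{j≥1} f_j t^j / j! be the corresponding formal power series in ℚ⟦t⟧ (with zero constant term). Then for all integers 1 ≤ k ≤ n, n! times the coefficient of t^n in f^k / k! equals ∑_{J} ∏_{B ∈ J} f_{|B|}, where the sum is over all partitions J of the set {1,…,n} into exactly k blocks. -/
open Finset Nat

/-
Writing `G` for the series, `n! [tⁿ] Gᵏ` is the sum, over all colourings `g` of `{1, …, n}`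
with `k` colours, of `∏ᵢ f_{|g⁻¹(i)|}` (where `f₀ = 0`): this is the binomial convolution of
exponential generating functions, proved by induction on `k` by splitting off the first colour
class.
Since `G` has no constant term, only surjective colourings contribute, and every partition
into `k` blocks is the partition into fibres of exactly `k!` surjective colourings.
-/

noncomputable def egfCoeff {R : Type*} [CommSemiring R] (m : ℕ) (G : PowerSeries R) : R :=
  m ! * PowerSeries.coeff m G

section ColouringSums

open PowerSeries

variable {R : Type*} [CommSemiring R]

theorem egfCoeff_mul (n : ℕ) (G H : R⟦X⟧) :
    egfCoeff n (G * H) =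
      ∑ m ∈ range (n + 1), (n.choose m : R) * (egfCoeff m G * egfCoeff (n - m) H) := by
  rw [egfCoeff, coeff_mul, Nat.sum_antidiagonal_eq_sum_range_succ_mk, mul_sum]
  refine sum_congr rfl fun m hm => ?_
  rw [← Nat.choose_mul_factorial_mul_factorial (Nat.lt_succ_iff.1 (mem_range.1 hm)),
    egfCoeff, egfCoeff]
  push_cast
  ring

theorem sum_prod_card_fiber_of_fiber_zero_eq (a : ℕ → R) (k : ℕ) {α : Type*} [Fintype α]
    [DecidableEq α] (B : Finset α) :
    ∑ g : α → Fin (k + 1) with ({x | g x = 0} : Finset α) = B, ∏ i, a #{x | g x = i} =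
      a #B * ∑ h : ↥Bᶜ → Fin k, ∏ i, a #{x | h x = i} := by
  have mem_iff {g : α → Fin (k + 1)}
      (hg : g ∈ ({g | ({x | g x = 0} : Finset α) = B} : Finset _)) (x : α) :
      x ∈ B ↔ g x = 0 := by
    simp [← (mem_filter.1 hg).2]
  rw [mul_sum]
  refine sum_bij' (fun g hg x => (g x).pred fun h0 => mem_compl.1 x.2 ((mem_iff hg x).2 h0))
    (fun h _ x => if hx : x ∈ B then 0 else (h ⟨x, mem_compl.2 hx⟩).succ) (by simp) ?_ ?_ ?_ ?_
  · intro h _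
    rw [mem_filter]
    refine ⟨mem_univ _, ?_⟩
    ext x
    by_cases hx : x ∈ B <;> simp [hx, Fin.succ_ne_zero]
  · intro g hg
    funext x
    by_cases hx : x ∈ B
    · simp [hx, (mem_iff hg x).1 hx]
    · simp [hx]
  · intro h _
    funext x
    simp [mem_compl.1 x.2]
  · intro g hg
    rw [Fin.prod_univ_succ]
    congr 2
    · rw [(mem_filter.1 hg).2]
    · funext i
      congr 1
      refine card_bij' (fun x hx => ⟨x, mem_compl.2 fun hB => ?_⟩) (fun x _ => x.1)
        ?_ ?_ ?_ ?_
      · simp_all [mem_iff hg x]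
      · intro x hx
        simpa [Fin.pred_eq_iff_eq_succ] using hx
      · intro x hx
        simpa [Fin.pred_eq_iff_eq_succ] using hx
      · exact fun _ _ => rfl
      · exact fun _ _ => rfl

theorem egfCoeff_pow (G : R⟦X⟧) (k : ℕ) (α : Type*) [Fintype α] [DecidableEq α] :
    egfCoeff (Fintype.card α) (G ^ k) =
      ∑ g : α → Fin k, ∏ i, egfCoeff #{x | g x = i} G := by
  induction k generalizing α with
  | zero =>
    rcases isEmpty_or_nonempty α with hα | hα
    · simp [egfCoeff]
    · simp [egfCoeff, coeff_one, Fintype.card_ne_zero]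
  | succ k ih =>
    calc egfCoeff (Fintype.card α) (G ^ (k + 1))
        = ∑ B : Finset α, egfCoeff #B G * egfCoeff (Fintype.card α - #B) (G ^ k) := by
          have := sum_powerset_apply_card (x := (univ : Finset α))
            fun m => egfCoeff m G * egfCoeff (Fintype.card α - m) (G ^ k)
          rw [powerset_univ, Finset.card_univ, eq_comm] at this
          simp only [nsmul_eq_mul] at this
          rw [_root_.pow_succ', egfCoeff_mul, this]
      _ = ∑ B : Finset α, egfCoeff #B G * ∑ h : ↥Bᶜ → Fin k, ∏ i, egfCoeff #{x | h x = i} G := by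
          refine sum_congr rfl fun B _ => ?_
          rw [← ih, Fintype.card_coe, card_compl]
      _ = ∑ g : α → Fin (k + 1), ∏ i, egfCoeff #{x | g x = i} G := by
          rw [← sum_fiberwise (g := fun g : α → Fin (k + 1) => ({x | g x = 0} : Finset α))]
          exact sum_congr rfl fun B _ => (sum_prod_card_fiber_of_fiber_zero_eq (egfCoeff · G) k B).symm

end ColouringSums

section KerPartition

open Function

variable {α β : Type*} [Fintype α] [DecidableEq β]

theorem injective_fiber_of_surjective {g : α → β} (hg : Surjective g) :
    Injective fun i => ({x | g x = i} : Finset α) := by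
  intro i j hij
  obtain ⟨x, rfl⟩ := hg i
  simpa using (Finset.ext_iff.1 hij x).1 (by simp)

variable [DecidableEq α]

def kerPartition (g : α → β) : Finpartition (univ : Finset α) :=
  letI : DecidableRel (Setoid.ker g) := fun x y => decidable_of_iff (g x = g y) Iff.rfl
  Finpartition.ofSetoid (Setoid.ker g)

variable [Fintype β]

theorem kerPartition_parts_of_surjective {g : α → β} (hg : Surjective g) :
    (kerPartition g).parts = univ.image fun i => ({x | g x = i} : Finset α) := by
  rw [← image_univ_of_surjective hg, image_image]
  simp only [kerPartition, Finpartition.ofSetoid, Finpartition.ofSetSetoid_parts]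
  congr 1
  funext x
  ext y
  simp [eq_comm]

theorem card_kerPartition_parts_of_surjective {g : α → β} (hg : Surjective g) :
    #(kerPartition g).parts = Fintype.card β := by
  rw [kerPartition_parts_of_surjective hg,
    card_image_of_injective _ (injective_fiber_of_surjective hg), Finset.card_univ]

theorem prod_kerPartition_parts_of_surjective {M : Type*} [CommMonoid M] (a : ℕ → M)
    {g : α → β} (hg : Surjective g) :
    ∏ B ∈ (kerPartition g).parts, a #B = ∏ i, a #{x | g x = i} := by
  rw [kerPartition_parts_of_surjective hg,
    prod_image fun i _ j _ h => injective_fiber_of_surjective hg h]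

theorem card_filter_surjective_kerPartition_eq (P : Finpartition (univ : Finset α))
    (hP : #P.parts = Fintype.card β) :
    #{g : α → β | Surjective g ∧ kerPartition g = P} = (Fintype.card β)! := by
  let ofEquiv (e : β ≃ P.parts) (x : α) : β := e.symm ⟨P.part x, P.part_mem.2 (mem_univ x)⟩
  have fiber_ofEquiv (e : β ≃ P.parts) (i : β) : ({x | ofEquiv e x = i} : Finset α) = e i := by
    ext x
    simp [ofEquiv, Equiv.symm_apply_eq, Subtype.ext_iff, P.part_eq_iff_mem (e i).2]
  have surjective_ofEquiv (e : β ≃ P.parts) : Surjective (ofEquiv e) := fun i => by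
    obtain ⟨x, hx⟩ := P.nonempty_of_mem_parts (e i).2
    exact ⟨x, by simpa [← fiber_ofEquiv e i] using hx⟩
  have kerPartition_ofEquiv (e : β ≃ P.parts) : kerPartition (ofEquiv e) = P := by
    ext B
    simp only [kerPartition_parts_of_surjective (surjective_ofEquiv e), fiber_ofEquiv,
      mem_image, mem_univ, true_and]
    exact ⟨by rintro ⟨i, rfl⟩; exact (e i).2, fun hB => ⟨e.symm ⟨B, hB⟩, by simp⟩⟩
  have bijective : Bijective fun e : β ≃ P.parts =>
      (⟨ofEquiv e, surjective_ofEquiv e, kerPartition_ofEquiv e⟩ :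
        {g : α → β // Surjective g ∧ kerPartition g = P}) := by
    refine ⟨fun e e' h => ?_, fun ⟨g, hg, hgP⟩ => ?_⟩
    · ext i : 2
      rw [← fiber_ofEquiv e, ← fiber_ofEquiv e', show ofEquiv e = ofEquiv e' from congrArg (·.1) h]
    · have mem_parts (i : β) : ({x | g x = i} : Finset α) ∈ P.parts := by
        rw [← hgP, kerPartition_parts_of_surjective hg]
        exact mem_image_of_mem _ (mem_univ i)
      let e : β ≃ P.parts := Equiv.ofBijective (fun i => ⟨_, mem_parts i⟩) <|
        (Fintype.bijective_iff_injective_and_card _).2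
          ⟨fun i j h => injective_fiber_of_surjective hg (congrArg (·.1) h), by simp [hP]⟩
      refine ⟨e, Subtype.ext (funext fun x => ?_)⟩
      simp only [ofEquiv, Equiv.symm_apply_eq, Subtype.ext_iff]
      exact P.part_eq_of_mem (mem_parts (g x)) (by simp [e])
  rw [← Fintype.card_subtype, ← Fintype.card_of_bijective bijective,
    Fintype.card_equiv (Fintype.equivOfCardEq (by rw [Fintype.card_coe, hP]))]

theorem sum_prod_card_fiber_eq_factorial_mul_sum_finpartition {R : Type*} [CommSemiring R]
    (a : ℕ → R) (ha : a 0 = 0) :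
    ∑ g : α → β, ∏ i, a #{x | g x = i} =
      (Fintype.card β)! * ∑ P : Finpartition (univ : Finset α) with #P.parts = Fintype.card β,
        ∏ B ∈ P.parts, a #B := by
  have surjective_of_ne_zero (g : α → β) (hg : ∏ i, a #{x | g x = i} ≠ 0) : Surjective g := by
    intro i
    by_contra! hi
    exact hg (prod_eq_zero (mem_univ i) (by simp [filter_eq_empty_iff.2 fun x _ => hi x, ha]))
  rw [← sum_filter_of_ne fun g _ => surjective_of_ne_zero g,
    ← sum_fiberwise_of_maps_to (g := kerPartition) (t := {P | #P.parts = Fintype.card β})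
      fun g hg => by simpa using card_kerPartition_parts_of_surjective (mem_filter.1 hg).2,
    mul_sum]
  refine sum_congr rfl fun P hP => ?_
  have prod_eq (g) (hg : g ∈ ({g : α → β | Surjective g ∧ kerPartition g = P} : Finset _)) :
      ∏ i, a #{x | g x = i} = ∏ B ∈ P.parts, a #B := by
    obtain ⟨hs, rfl⟩ := (mem_filter.1 hg).2
    exact (prod_kerPartition_parts_of_surjective a hs).symm
  rw [filter_filter, sum_congr rfl prod_eq, sum_const,
    card_filter_surjective_kerPartition_eq P (mem_filter.1 hP).2, nsmul_eq_mul]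

end KerPartition

theorem statement1_general (f : ℕ → ℚ) (n k : ℕ) :
    (n ! : ℚ) *
        (PowerSeries.coeff (R := ℚ) n
          ((PowerSeries.mk fun j => if j = 0 then 0 else f j / (j ! : ℚ)) ^ k)) / (k ! : ℚ) =
      ∑ P ∈ Finset.univ.filter
          (fun P : Finpartition (Finset.univ : Finset (Fin n)) => P.parts.card = k),
        ∏ B ∈ P.parts, f B.card := by
  set G := PowerSeries.mk fun j => if j = 0 then 0 else f j / (j ! : ℚ)
  have egfCoeff_G (m : ℕ) : egfCoeff m G = if m = 0 then 0 else f m := by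
    split_ifs with hm <;> simp [egfCoeff, G, hm, mul_div_assoc', m.factorial_ne_zero]
  have expansion := egfCoeff_pow G k (Fin n)
  have grouping := sum_prod_card_fiber_eq_factorial_mul_sum_finpartition (α := Fin n)
    (β := Fin k) (egfCoeff · G) (by simp [egfCoeff_G])
  rw [Fintype.card_fin] at expansion grouping
  change egfCoeff n (G ^ k) / k ! = _
  rw [expansion, grouping, mul_div_cancel_left₀ _ (by positivity)]
  refine sum_congr rfl fun P _ => prod_congr rfl fun B hB => ?_
  rw [egfCoeff_G, if_neg (card_ne_zero.2 (P.nonempty_of_mem_parts hB))]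

/-- For a sequence `f : ℕ → ℚ` (only the values at `j ≥ 1` matter) with
associated power series `F = ∑_{j ≥ 1} f j * t^j / j!`, and for `1 ≤ k ≤ n`, the
partial Bell polynomial `n! * (coefficient of t^n in F^k / k!)` equals the sum over all
partitions `P` of `{1, …, n}` into exactly `k` blocks of the product over the blocks `B`
of `f |B|`. -/
theorem statement1 (f : ℕ → ℚ) (n k : ℕ) (hk : 1 ≤ k) (hkn : k ≤ n) :
    (n ! : ℚ) *
        (PowerSeries.coeff (R := ℚ) n
          ((PowerSeries.mk fun j => if j = 0 then 0 else f j / (j ! : ℚ)) ^ k)) / (k ! : ℚ) =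
      ∑ P ∈ Finset.univ.filter
          (fun P : Finpartition (Finset.univ : Finset (Fin n)) => P.parts.card = k),
        ∏ B ∈ P.parts, f B.card :=
  statement1_general f n k
end

section
/- Let f, g ∈ ℚ⟦t⟧ be formal power series with zero constant term such that g(f(t)) = t and f(g(t)) = t (g is the compositional inverse of f). Write f_j := j!·(coefficient of t^j in f) and g_j := j!·(coefficient of t^j in g), and for 1 ≤ k ≤ n define F_{n,k} = ∑_{J} ∏_{B ∈ J} f_{|B|} and G_{n,k} = ∑_{J} ∏_{B ∈ J} g_{|B|}, where each sum is over all partitions J of {1,…,n} into exactly k blocks. Then for all 1 ≤ k ≤ n, ∑_{m=k}^{n} F_{n,m} · G_{m,k} equals 1 if n = k and 0 otherwise. -/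
/-!
Marking one block of a partition of `s` into `k + 1` blocks identifies such marked partitions
with pairs (a nonempty block `B ⊆ s`, a partition of `s \ B` into `k` blocks). Together with
the binomial convolution of exponential generating functions this gives, by induction on `k`,
`k! · B_{n,k}(f_1, f_2, …) = n! · [tⁿ] f(t)ᵏ`. Hence
`k! · ∑ₘ F_{n,m} G_{m,k} = n! · ∑ₘ [tᵐ] g(t)ᵏ · [tⁿ] f(t)ᵐ = n! · [tⁿ] g(f(t))ᵏ`,
which is `n! · [tⁿ] tᵏ`.
-/

open Finset Nat

/-- Composition `g ∘ f` of formal power series: for `f` with zero constant term, the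
coefficient of `t^n` in `g(f(t))` is `∑_{m ≤ n} (coeff m g) · (coeff n (f^m))`. -/
noncomputable def PowerSeries.comp (g f : PowerSeries ℚ) : PowerSeries ℚ :=
  PowerSeries.mk fun n =>
    ∑ m ∈ Finset.range (n + 1), PowerSeries.coeff m g * PowerSeries.coeff n (f ^ m)

namespace PowerSeries

theorem coeff_pow_eq_zero_of_lt {R : Type*} [CommSemiring R] {f : R⟦X⟧}
    (hf : constantCoeff f = 0) {n m : ℕ} (h : n < m) : coeff n (f ^ m) = 0 :=
  coeff_of_lt_order n ((Nat.cast_lt.2 h).trans_le (le_order_pow_of_constantCoeff_eq_zero m hf))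

theorem factorial_mul_coeff_mul_eq_sum_powerset {R β : Type*} [CommSemiring R]
    (f g : R⟦X⟧) (s : Finset β) :
    ((#s)! : R) * coeff #s (f * g) =
      ∑ B ∈ s.powerset, ((#B)! * coeff #B f) * ((#s - #B)! * coeff (#s - #B) g) := by
  rw [sum_powerset_apply_card (fun j => ((j ! : R) * coeff j f) * ((#s - j)! * coeff (#s - j) g)),
    coeff_mul, Nat.sum_antidiagonal_eq_sum_range_succ_mk, mul_sum]
  refine sum_congr rfl fun j hj => ?_
  have hchoose := Nat.choose_mul_factorial_mul_factorial (Nat.lt_succ_iff.1 (mem_range.1 hj))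
  rw [nsmul_eq_mul, ← hchoose]
  push_cast
  ring

theorem coeff_comp (g f : ℚ⟦X⟧) (n : ℕ) :
    coeff n (g.comp f) = ∑ m ∈ range (n + 1), coeff m g * coeff n (f ^ m) :=
  coeff_mk _ _

theorem comp_eq_subst {f : ℚ⟦X⟧} (hf : constantCoeff f = 0) (g : ℚ⟦X⟧) :
    g.comp f = g.subst f := by
  ext n
  rw [coeff_comp, coeff_subst' (HasSubst.of_constantCoeff_zero' hf),
    finsum_eq_sum_of_support_subset _ (s := range (n + 1))]
  · simp only [smul_eq_mul]
  · intro m hm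
    rw [coe_range, Set.mem_Iio]
    by_contra hmn
    exact hm (by dsimp only; rw [smul_eq_mul, coeff_pow_eq_zero_of_lt hf (by omega), mul_zero])

theorem comp_pow {f : ℚ⟦X⟧} (hf : constantCoeff f = 0) (g : ℚ⟦X⟧) (k : ℕ) :
    (g ^ k).comp f = (g.comp f) ^ k := by
  rw [comp_eq_subst hf, comp_eq_subst hf, subst_pow (HasSubst.of_constantCoeff_zero' hf)]

end PowerSeries

namespace Finpartition

variable {α : Type*} [GeneralizedBooleanAlgebra α] [DecidableEq α] {a b c : α}

theorem avoid_parts_of_mem (P : Finpartition a) (hb : b ∈ P.parts) :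
    (P.avoid b).parts = P.parts.erase b := by
  ext c
  rw [mem_avoid, mem_erase]
  constructor
  · rintro ⟨d, hd, hdb, rfl⟩
    have hne : d ≠ b := fun h => hdb h.le
    have hdisj : Disjoint d b := P.disjoint hd hb hne
    rw [hdisj.sdiff_eq_left]
    exact ⟨hne, hd⟩
  · rintro ⟨hcb, hc⟩
    have hdisj : Disjoint c b := P.disjoint hc hb hcb
    exact ⟨c, hc, fun hle => P.ne_bot hc (hdisj.eq_bot_of_le hle), hdisj.sdiff_eq_left⟩

theorem extend_avoid (P : Finpartition a) (hb : b ∈ P.parts) :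
    (P.avoid b).extend (P.ne_bot hb) disjoint_sdiff_self_left (sdiff_sup_cancel (P.le hb)) = P :=
  Finpartition.ext <| by rw [extend_parts, avoid_parts_of_mem P hb, insert_erase hb]

theorem avoid_extend_parts (P : Finpartition a) (hb : b ≠ ⊥) (hab : Disjoint a b)
    (hc : a ⊔ b = c) : ((P.extend hb hab hc).avoid b).parts = P.parts := by
  have hbP : b ∉ P.parts := fun h => hb (hab.symm.eq_bot_of_le (P.le h))
  rw [avoid_parts_of_mem _ (by simp), extend_parts, erase_insert hbP]

end Finpartition

section PartialBell

variable {α R : Type*} [DecidableEq α] [CommSemiring R]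

def partialBell (x : ℕ → R) (s : Finset α) (k : ℕ) : R :=
  ∑ P ∈ univ.filter (fun P : Finpartition s => #P.parts = k), ∏ B ∈ P.parts, x #B

theorem partialBell_zero (x : ℕ → R) (s : Finset α) :
    partialBell x s 0 = if s = ∅ then 1 else 0 := by
  split_ifs with hs
  · subst hs
    have hparts (P : Finpartition (∅ : Finset α)) : P.parts = ∅ :=
      Finpartition.parts_eq_empty_iff.2 rfl
    rw [partialBell, filter_true_of_mem fun P _ => by rw [hparts, card_empty]]
    have hunique : Fintype.card (Finpartition (∅ : Finset α)) = 1 :=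
      Fintype.card_eq_one_iff.2 ⟨⊥, fun P => Finpartition.ext (by rw [hparts, hparts])⟩
    simp [hparts, hunique]
  · refine sum_eq_zero fun P hP => absurd ?_ hs
    rw [mem_filter, Finset.card_eq_zero, Finpartition.parts_eq_empty_iff] at hP
    exact hP.2

theorem succ_mul_partialBell_succ (x : ℕ → R) (s : Finset α) (k : ℕ) :
    (k + 1) * partialBell x s (k + 1) =
      ∑ B ∈ s.powerset with B.Nonempty, x #B * partialBell x (s \ B) k := by
  have hmark (P : Finpartition s) (hP : #P.parts = k + 1) :
      (k + 1) * ∏ B ∈ P.parts, x #B =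
        ∑ B ∈ P.parts, x #B * ∏ C ∈ (P.avoid B).parts, x #C := by
    rw [← Nat.cast_add_one, ← hP, ← nsmul_eq_mul, ← sum_const]
    refine sum_congr rfl fun B hB => ?_
    rw [P.avoid_parts_of_mem hB, mul_prod_erase _ (fun C => x #C) hB]
  simp only [partialBell, mul_sum]
  rw [sum_congr rfl fun P hP => hmark P (mem_filter.1 hP).2, sum_sigma', sum_sigma']
  refine sum_bij' (fun y _ => ⟨y.2, y.1.avoid y.2⟩)
    (fun y hy =>
      have hB := mem_filter.1 (mem_sigma.1 hy).1
      ⟨y.2.extend (nonempty_iff_ne_empty.1 hB.2) sdiff_disjoint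
        (sdiff_union_of_subset (mem_powerset.1 hB.1)), y.1⟩)
    ?_ ?_ ?_ ?_ (fun _ _ => rfl)
  · rintro ⟨P, B⟩ hy
    obtain ⟨hP, hB⟩ := mem_sigma.1 hy
    simp only [mem_sigma, mem_filter, mem_powerset, mem_univ, true_and] at hP ⊢
    refine ⟨⟨P.le hB, P.nonempty_of_mem_parts hB⟩, ?_⟩
    rw [P.avoid_parts_of_mem hB, card_erase_of_mem hB, hP, Nat.add_sub_cancel]
  · rintro ⟨B, Q⟩ hy
    obtain ⟨-, hQ⟩ := mem_sigma.1 hy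
    simp only [mem_sigma, mem_filter, mem_univ, true_and] at hQ ⊢
    exact ⟨by rw [Finpartition.card_extend, hQ], by simp⟩
  · rintro ⟨P, B⟩ hy
    exact Sigma.ext (P.extend_avoid (mem_sigma.1 hy).2) HEq.rfl
  · rintro ⟨B, Q⟩ -
    refine Sigma.ext rfl (heq_of_eq (Finpartition.ext ?_))
    dsimp only
    exact Q.avoid_extend_parts _ _ _

end PartialBell

namespace PowerSeries

theorem factorial_mul_partialBell {α R : Type*} [DecidableEq α] [CommSemiring R]
    {f : R⟦X⟧} (hf : constantCoeff f = 0) (s : Finset α) (k : ℕ) :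
    (k ! : R) * partialBell (fun j => (j ! : R) * coeff j f) s k = (#s)! * coeff #s (f ^ k) := by
  set x : ℕ → R := fun j => (j ! : R) * coeff j f
  induction k generalizing s with
  | zero =>
    rw [partialBell_zero, pow_zero, coeff_one, factorial_zero, Nat.cast_one, one_mul]
    by_cases hs : s = ∅ <;> simp [hs]
  | succ k ih =>
    have hx0 : x 0 = 0 := by simp [x, hf]
    calc (((k + 1)! : ℕ) : R) * partialBell x s (k + 1)
        = k ! * ((k + 1) * partialBell x s (k + 1)) := by push_cast [factorial_succ]; ring
      _ = ∑ B ∈ s.powerset with B.Nonempty, x #B * (k ! * partialBell x (s \ B) k) := by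
        rw [succ_mul_partialBell_succ, mul_sum]
        exact sum_congr rfl fun _ _ => mul_left_comm _ _ _
      _ = ∑ B ∈ s.powerset with B.Nonempty, x #B * ((#s - #B)! * coeff (#s - #B) (f ^ k)) :=
        sum_congr rfl fun B hB => by
          rw [ih, card_sdiff_of_subset (mem_powerset.1 (mem_filter.1 hB).1)]
      _ = ∑ B ∈ s.powerset, x #B * ((#s - #B)! * coeff (#s - #B) (f ^ k)) := by
        refine sum_filter_of_ne fun B _ hB => nonempty_iff_ne_empty.2 fun hBe => hB ?_
        rw [hBe, card_empty, hx0, zero_mul]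
      _ = (#s)! * coeff #s (f ^ (k + 1)) := by
        rw [_root_.pow_succ', factorial_mul_coeff_mul_eq_sum_powerset]

theorem factorial_mul_sum_partialBell_mul_partialBell {f g : ℚ⟦X⟧} (hf : constantCoeff f = 0)
    (hg : constantCoeff g = 0) (n k : ℕ) :
    (k ! : ℚ) * ∑ m ∈ Icc k n,
        partialBell (fun j => (j ! : ℚ) * coeff j f) (univ : Finset (Fin n)) m *
          partialBell (fun j => (j ! : ℚ) * coeff j g) (univ : Finset (Fin m)) k =
      n ! * coeff n ((g ^ k).comp f) := by
  have hF (m : ℕ) := factorial_mul_partialBell hf (univ : Finset (Fin n)) m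
  have hG (m : ℕ) := factorial_mul_partialBell hg (univ : Finset (Fin m)) k
  simp only [Finset.card_fin] at hF hG
  have hlow : ∀ m ∈ range (n + 1), m ∉ Icc k n → coeff m (g ^ k) * coeff n (f ^ m) = 0 :=
    fun m hm hmk => by
      rw [coeff_pow_eq_zero_of_lt hg (by simp_all), zero_mul]
  have hIcc : Icc k n ⊆ range (n + 1) := fun m hm =>
    mem_range.2 (Nat.lt_succ_of_le (mem_Icc.1 hm).2)
  rw [coeff_comp, ← sum_subset hIcc hlow, mul_sum, mul_sum]
  refine sum_congr rfl fun m _ => ?_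
  linear_combination
    partialBell (fun j => (j ! : ℚ) * coeff j f) (univ : Finset (Fin n)) m * hG m +
      coeff m (g ^ k) * hF m

end PowerSeries

theorem statement2_general (f g : PowerSeries ℚ)
    (hf : PowerSeries.constantCoeff f = 0) (hg : PowerSeries.constantCoeff g = 0)
    (hgf : PowerSeries.comp g f = PowerSeries.X)
    (n k : ℕ) :
    ∑ m ∈ Finset.Icc k n,
        (∑ P ∈ Finset.univ.filter
            (fun P : Finpartition (Finset.univ : Finset (Fin n)) => P.parts.card = m),
          ∏ B ∈ P.parts, (B.card ! : ℚ) * PowerSeries.coeff B.card f) *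
        (∑ Q ∈ Finset.univ.filter
            (fun Q : Finpartition (Finset.univ : Finset (Fin m)) => Q.parts.card = k),
          ∏ B ∈ Q.parts, (B.card ! : ℚ) * PowerSeries.coeff B.card g) =
      if n = k then 1 else 0 := by
  have h := PowerSeries.factorial_mul_sum_partialBell_mul_partialBell hf hg n k
  rw [PowerSeries.comp_pow hf, hgf, PowerSeries.coeff_X_pow] at h
  refine mul_left_cancel₀ (Nat.cast_ne_zero.2 k.factorial_ne_zero) (h.trans ?_)
  split_ifs with hnk
  · rw [hnk, mul_one]
  · rw [mul_zero, mul_zero]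

/-- If `f` and `g` are formal power series over `ℚ` with zero constant
term which are compositional inverses of each other, and `F n k`, `G n k` denote the
partial Bell polynomial matrices built from the scaled coefficients `f_j = j! · coeff j f`
and `g_j = j! · coeff j g`, then the matrices `F` and `G` are inverse to each other. -/
theorem statement2 (f g : PowerSeries ℚ)
    (hf : PowerSeries.constantCoeff f = 0) (hg : PowerSeries.constantCoeff g = 0)
    (hgf : PowerSeries.comp g f = PowerSeries.X)
    (hfg : PowerSeries.comp f g = PowerSeries.X)
    (n k : ℕ) (hk : 1 ≤ k) (hkn : k ≤ n) :
    ∑ m ∈ Finset.Icc k n,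
        (∑ P ∈ Finset.univ.filter
            (fun P : Finpartition (Finset.univ : Finset (Fin n)) => P.parts.card = m),
          ∏ B ∈ P.parts, (B.card ! : ℚ) * PowerSeries.coeff B.card f) *
        (∑ Q ∈ Finset.univ.filter
            (fun Q : Finpartition (Finset.univ : Finset (Fin m)) => Q.parts.card = k),
          ∏ B ∈ Q.parts, (B.card ! : ℚ) * PowerSeries.coeff B.card g) =
      if n = k then 1 else 0 :=
  statement2_general f g hf hg hgf n k
end

section
/- For every integer n ≥ 4, the coefficient of ω^n in the formal power series expansion in ℚ⟦ω⟧ of ( ∏_{j=0}^{n−1} ((1−j)·ω − 1 − ω²) ) · (1 − ω² − 2ω⁴ − ω⁶ + ω⁸) / ((1 + ω²)(1 − ω⁶)) equals (−1)^{n+1} · n! / 12. -/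
/-!
The first four factors of the product are `−(1 − ω + ω²)`, `−(1 + ω²)`, `−(1 + ω + ω²)` and
`−(1 + ω)²`, so together with `1 − ω` they give `(1 + ω)(1 + ω²)(1 − ω⁶)`. Hence the series equals
`A / (1 − ω)` for the polynomial `A = (1 + ω) · N · ∏_{4 ≤ j < n} ((1 − j)ω − 1 − ω²)`, where `N` is
the numerator, and its `ωⁿ` coefficient is `a₀ + ⋯ + aₙ`. Every factor of `A` is palindromic, so `A`
is palindromic of odd degree `2n + 1` and `a₀ + ⋯ + aₙ = A(1) / 2`. At `ω = 1` the `j`-th factor is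
`−(j + 1)` and `N(1) = −2`, whence `A(1) / 2 = (−1)ⁿ⁺¹ n! / 12`.
-/

open Finset Nat PowerSeries

namespace PowerSeries

theorem coeff_eq_sum_range_of_one_sub_X_mul {R : Type*} [CommRing R] {f g : R⟦X⟧}
    (h : (1 - X) * f = g) (n : ℕ) :
    coeff n f = ∑ k ∈ range (n + 1), coeff k g := by
  have hf : f = g * mk 1 := by
    rw [← h, mul_comm, ← mul_assoc, mk_one_mul_one_sub_eq_one, one_mul]
  simp only [hf, coeff_mul, coeff_mk, Pi.one_apply, mul_one]
  exact Nat.sum_antidiagonal_eq_sum_range_succ (fun k _ => coeff k g) n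

end PowerSeries

namespace Polynomial

variable {R : Type*}

def IsPalindromic [Semiring R] (N : ℕ) (p : R[X]) : Prop :=
  p.natDegree ≤ N ∧ p.reflect N = p

namespace IsPalindromic

section Semiring

variable [Semiring R]

theorem one : IsPalindromic 0 (1 : R[X]) :=
  ⟨natDegree_one.le, by rw [reflect_one, pow_zero]⟩

theorem mul {M N : ℕ} {p q : R[X]} (hp : IsPalindromic M p) (hq : IsPalindromic N q) :
    IsPalindromic (M + N) (p * q) :=
  ⟨natDegree_mul_le.trans (Nat.add_le_add hp.1 hq.1),
    by rw [reflect_mul _ _ hp.1 hq.1, hp.2, hq.2]⟩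

theorem coeff_eq {N : ℕ} {p : R[X]} (hp : IsPalindromic N p) {i : ℕ} (hi : i ≤ N) :
    p.coeff i = p.coeff (N - i) := by
  conv_lhs => rw [← hp.2]
  rw [coeff_reflect, revAt_le hi]

theorem two_mul_sum_coeff {k : ℕ} {p : R[X]} (hp : IsPalindromic (2 * k + 1) p) :
    2 * ∑ i ∈ range (k + 1), p.coeff i = p.eval 1 := by
  have upper_half : ∑ i ∈ range (k + 1), p.coeff (k + 1 + i) =
      ∑ i ∈ range (k + 1), p.coeff i := by
    rw [← sum_range_reflect]
    refine sum_congr rfl fun i hi => ?_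
    have := mem_range.1 hi
    rw [hp.coeff_eq (by omega)]
    congr 1
    omega
  rw [eval_eq_sum_range' (n := (k + 1) + (k + 1)) (by have := hp.1; omega)]
  simp only [one_pow, mul_one]
  rw [sum_range_add (fun i => p.coeff i) (k + 1) (k + 1), upper_half, two_mul]

end Semiring

theorem prod {ι : Type*} [CommSemiring R] {s : Finset ι} {N : ι → ℕ} {f : ι → R[X]}
    (h : ∀ i ∈ s, IsPalindromic (N i) (f i)) :
    IsPalindromic (∑ i ∈ s, N i) (∏ i ∈ s, f i) := by
  classical
  induction s using Finset.induction_on with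
  | empty => exact one
  | insert i s hi ih =>
    rw [sum_insert hi, prod_insert hi]
    exact (h i (mem_insert_self i s)).mul (ih fun j hj => h j (mem_insert_of_mem hj))

end IsPalindromic

end Polynomial

namespace EulerCharM1n

open scoped Polynomial
open Polynomial (IsPalindromic reflect_sub reflect_add reflect_C_mul_X_pow reflect_monomial
  reflect_one revAt_le eval_prod)

noncomputable def factor (j : ℕ) : ℚ[X] :=
  Polynomial.C (1 - (j : ℚ)) * Polynomial.X - 1 - Polynomial.X ^ 2

noncomputable def numerator : ℚ[X] :=
  1 - Polynomial.X ^ 2 - 2 * Polynomial.X ^ 4 - Polynomial.X ^ 6 + Polynomial.X ^ 8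

noncomputable def denominator : ℚ[X] := (1 + Polynomial.X ^ 2) * (1 - Polynomial.X ^ 6)

noncomputable def reducedNumerator (m : ℕ) : ℚ[X] :=
  (1 + Polynomial.X) * numerator * ∏ j ∈ range m, factor (4 + j)

theorem isPalindromic_factor (j : ℕ) : IsPalindromic 2 (factor j) := by
  refine ⟨by unfold factor; compute_degree, ?_⟩
  rw [factor]
  nth_rw 1 [← pow_one Polynomial.X]
  simp only [reflect_sub, reflect_C_mul_X_pow, reflect_monomial, reflect_one]
  rw [revAt_le (by norm_num), revAt_le le_rfl]
  ring

theorem isPalindromic_numerator : IsPalindromic 8 numerator := by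
  refine ⟨by unfold numerator; compute_degree, ?_⟩
  rw [numerator, ← Polynomial.C_ofNat 2]
  simp only [reflect_sub, reflect_add, reflect_C_mul_X_pow, reflect_monomial, reflect_one]
  rw [revAt_le (by norm_num), revAt_le (by norm_num), revAt_le (by norm_num), revAt_le le_rfl]
  ring

theorem isPalindromic_one_add_X : IsPalindromic 1 (1 + Polynomial.X : ℚ[X]) := by
  refine ⟨by compute_degree, ?_⟩
  nth_rw 1 [← pow_one Polynomial.X]
  rw [reflect_add, reflect_monomial, reflect_one, revAt_le le_rfl]
  ring

theorem isPalindromic_reducedNumerator (m : ℕ) :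
    IsPalindromic (2 * (m + 4) + 1) (reducedNumerator m) := by
  have h := (isPalindromic_one_add_X.mul isPalindromic_numerator).mul
    (IsPalindromic.prod fun j (_ : j ∈ range m) => isPalindromic_factor (4 + j))
  rwa [sum_const, card_range, smul_eq_mul, show 1 + 8 + m * 2 = 2 * (m + 4) + 1 by ring] at h

theorem one_sub_X_mul_prod_range_four_factor :
    (1 - Polynomial.X) * ∏ j ∈ range 4, factor j = (1 + Polynomial.X) * denominator := by
  simp only [factor, denominator, map_sub, map_one, map_natCast, prod_range_succ, range_one,
    prod_singleton, CharP.cast_eq_zero, sub_zero, one_mul, cast_one, sub_self, zero_mul,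
    zero_sub, cast_ofNat]
  ring

theorem one_sub_X_mul_prod_factor_mul_numerator (m : ℕ) :
    (1 - Polynomial.X) * ((∏ j ∈ range (m + 4), factor j) * numerator) =
      reducedNumerator m * denominator := by
  rw [add_comm m 4, prod_range_add, reducedNumerator, ← mul_assoc, ← mul_assoc,
    one_sub_X_mul_prod_range_four_factor]
  ring

theorem eval_one_factor (j : ℕ) : (factor j).eval 1 = -((j : ℚ) + 1) := by
  simp only [factor, Polynomial.eval_sub, Polynomial.eval_mul, Polynomial.eval_C,
    Polynomial.eval_one, Polynomial.eval_X, Polynomial.eval_pow]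
  ring

theorem eval_one_prod_factor (n : ℕ) :
    (∏ j ∈ range n, factor j).eval 1 = (-1) ^ n * (n ! : ℚ) := by
  rw [eval_prod]
  simp only [eval_one_factor, neg_eq_neg_one_mul (_ + 1 : ℚ), prod_mul_distrib, prod_const,
    card_range, ← prod_range_add_one_eq_factorial]
  push_cast
  rfl

theorem eval_one_reducedNumerator (m : ℕ) :
    (reducedNumerator m).eval 1 = (-1) ^ (m + 1) * ((m + 4)! : ℚ) / 6 := by
  have h := eval_one_prod_factor (4 + m)
  rw [prod_range_add, Polynomial.eval_mul, eval_one_prod_factor, add_comm 4 m, pow_add] at h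
  simp only [reducedNumerator, numerator, Polynomial.eval_mul, Polynomial.eval_add,
    Polynomial.eval_sub, Polynomial.eval_pow, Polynomial.eval_one, Polynomial.eval_X,
    Polynomial.eval_ofNat]
  linear_combination (-1 / 6 : ℚ) * h

theorem coeff_prod_factor_mul_numerator_mul_inv_denominator (m : ℕ) :
    coeff (m + 4) (((∏ j ∈ range (m + 4), factor j : ℚ[X]) : ℚ⟦X⟧) * (numerator : ℚ⟦X⟧) *
      (denominator : ℚ⟦X⟧)⁻¹) = (-1) ^ (m + 5) * ((m + 4)! : ℚ) / 12 := by
  have hD : constantCoeff (denominator : ℚ⟦X⟧) ≠ 0 := by simp [denominator]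
  have h : (1 - X) * (((∏ j ∈ range (m + 4), factor j : ℚ[X]) : ℚ⟦X⟧) * (numerator : ℚ⟦X⟧) *
      (denominator : ℚ⟦X⟧)⁻¹) = (reducedNumerator m : ℚ⟦X⟧) := by
    rw [← Polynomial.coe_mul, ← mul_assoc, ← Polynomial.coe_X, ← Polynomial.coe_one,
      ← Polynomial.coe_sub, ← Polynomial.coe_mul, one_sub_X_mul_prod_factor_mul_numerator,
      Polynomial.coe_mul, mul_assoc, PowerSeries.mul_inv_cancel _ hD, mul_one]
  have half_sum := (isPalindromic_reducedNumerator m).two_mul_sum_coeff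
  rw [eval_one_reducedNumerator] at half_sum
  rw [coeff_eq_sum_range_of_one_sub_X_mul h]
  simp only [Polynomial.coeff_coe]
  linear_combination half_sum / 2

end EulerCharM1n

/-- For every `n ≥ 4`, the coefficient of `ω^n` in the formal power
series expansion in `ℚ⟦ω⟧` of
`(∏_{j=0}^{n−1} ((1−j)·ω − 1 − ω²)) · (1 − ω² − 2ω⁴ − ω⁶ + ω⁸) / ((1 + ω²)(1 − ω⁶))`
equals `(−1)^{n+1} · n! / 12`. -/
theorem statement13 (n : ℕ) (hn : 4 ≤ n) :
    PowerSeries.coeff (R := ℚ) n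
        ((∏ j ∈ Finset.range n,
            (PowerSeries.C (R := ℚ) (1 - (j : ℚ)) * PowerSeries.X - 1 - PowerSeries.X ^ 2)) *
          (1 - PowerSeries.X ^ 2 - 2 * PowerSeries.X ^ 4 - PowerSeries.X ^ 6 +
            PowerSeries.X ^ 8) *
          ((1 + PowerSeries.X ^ 2) * (1 - PowerSeries.X ^ 6) : PowerSeries ℚ)⁻¹) =
      (-1 : ℚ) ^ (n + 1) * (n ! : ℚ) / 12 := by
  obtain ⟨m, rfl⟩ : ∃ m, n = m + 4 := ⟨n - 4, by omega⟩
  convert EulerCharM1n.coeff_prod_factor_mul_numerator_mul_inv_denominator m using 4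
  all_goals
    simp only [EulerCharM1n.factor, EulerCharM1n.numerator, EulerCharM1n.denominator,
      ← Polynomial.coeToPowerSeries.ringHom_apply, map_prod, map_sub, map_add, map_mul, map_pow,
      map_one, map_ofNat]
    simp only [Polynomial.coeToPowerSeries.ringHom_apply, Polynomial.coe_X, Polynomial.coe_C]
end
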